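/- arXiv:2102.02311 — 10 statements merged into one kernel-verified Lean document; each statement's English description precedes it below -/
import Mathlib

section
/- If X⃗=x⃗ is strongly sufficient for Y⃗=y⃗ in a recursive causal model M, then X⃗=x⃗ is weakly sufficient for Y⃗=y⃗ in M. -/
open Classical

/-- A strongly recursive structural-equations (causal) model with exogenous
variables `U`, endogenous variables `V`, and values in `α`.  `rng v` is the
range `R(v)` of an endogenous variable; `F v u s` is the structural equation of
`v` evaluated in context `u` at the assignment `s` (it does not depend on
`s v`); `solve Z g u` is the unique solution of the model obtained by
intervening `Z ← g` in context `u`; `actual u` is the actual world of context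
`u`; `prec` is a well-founded order witnessing strong recursivity. -/
structure CausalModel (U V α : Type) where
  rng : V → Set α
  F : V → U → (V → α) → α
  F_rng : ∀ (v : V) (u : U) (s : V → α), F v u s ∈ rng v
  F_self : ∀ (v : V) (u : U) (s s' : V → α), (∀ w, w ≠ v → s w = s' w) → F v u s = F v u s'
  solve : Set V → (V → α) → U → V → α
  solve_mem : ∀ (Z : Set V) (g : V → α) (u : U), ∀ v ∈ Z, solve Z g u v = g v
  solve_not_mem : ∀ (Z : Set V) (g : V → α) (u : U) (v : V), v ∉ Z →
    solve Z g u v = F v u (solve Z g u)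
  solve_unique : ∀ (Z : Set V) (g : V → α) (u : U) (s : V → α),
    (∀ v ∈ Z, s v = g v) → (∀ v ∉ Z, s v = F v u s) → s = solve Z g u
  actual : U → V → α
  actual_def : ∀ (g : V → α) (u : U), solve ∅ g u = actual u
  prec : V → V → Prop
  prec_wf : WellFounded prec
  prec_dep : ∀ a b : V, (∃ (u : U) (s s' : V → α), (∀ w, s w ∈ rng w) ∧ (∀ w, s' w ∈ rng w) ∧
    (∀ w, w ≠ a → s w = s' w) ∧ F b u s ≠ F b u s') → prec a b

namespace CausalModel

variable {U V α : Type}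

/-- The assignment that is `x` on `X` and `g` elsewhere. -/
noncomputable def merge (X : Set V) (x g : V → α) : V → α :=
  fun v => if v ∈ X then x v else g v

/-- `g` is a valid setting: every variable gets a value in its range. -/
def Setting (M : CausalModel U V α) (g : V → α) : Prop := ∀ v, g v ∈ M.rng v

/-- `X⃗=x⃗` is directly sufficient for `Y⃗=y⃗`: in every context, intervening
`X⃗ ← x⃗` together with arbitrary (in-range) values for all remaining variables
`C⃗ = V ∖ (X⃗ ∪ Y⃗)` yields `Y⃗ = y⃗`. -/
def directlySuff (M : CausalModel U V α) (X : Set V) (x : V → α) (Y : Set V) (y : V → α) : Prop :=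
  ∀ g : V → α, M.Setting g → (∀ v ∈ X, g v = x v) →
    ∀ u : U, ∀ v ∈ Y, M.solve (X ∪ (X ∪ Y)ᶜ) g u v = y v

/-- Actual direct sufficiency: as `directlySuff` but only in the given context `u`. -/
def actDirectlySuff (M : CausalModel U V α) (u : U) (X : Set V) (x : V → α)
    (Y : Set V) (y : V → α) : Prop :=
  ∀ g : V → α, M.Setting g → (∀ v ∈ X, g v = x v) →
    ∀ v ∈ Y, M.solve (X ∪ (X ∪ Y)ᶜ) g u v = y v

/-- `X⃗=x⃗` is weakly sufficient for `Y⃗=y⃗`: in every context, `[X⃗ ← x⃗] Y⃗=y⃗`. -/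
def weaklySuff (M : CausalModel U V α) (X : Set V) (x : V → α) (Y : Set V) (y : V → α) : Prop :=
  ∀ u : U, ∀ v ∈ Y, M.solve X x u v = y v

/-- Actual weak sufficiency in context `u`: `(M,u) ⊨ [X⃗ ← x⃗] Y⃗=y⃗`. -/
def actWeaklySuff (M : CausalModel U V α) (u : U) (X : Set V) (x : V → α)
    (Y : Set V) (y : V → α) : Prop :=
  ∀ v ∈ Y, M.solve X x u v = y v

/-- `X⃗=x⃗` is strongly sufficient for `Y⃗=y⃗`: it is directly sufficient for some
superset `N⃗ ⊇ Y⃗` with values extending `y⃗`. -/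
def stronglySuff (M : CausalModel U V α) (X : Set V) (x : V → α) (Y : Set V) (y : V → α) : Prop :=
  ∃ (N : Set V) (n : V → α), Y ⊆ N ∧ (∀ v ∈ Y, n v = y v) ∧ M.directlySuff X x N n

/-- Actual strong sufficiency of `X⃗=x⃗` for the single effect `Y0 = y` along the
network `N` in context `u`. -/
def actStronglySuffNet (M : CausalModel U V α) (u : U) (X : Set V) (x : V → α)
    (Y0 : V) (y : α) (N : Set V) : Prop :=
  ∃ n : V → α, Y0 ∈ N ∧ n Y0 = y ∧ M.actDirectlySuff u X x N n

/-- `a` is a parent of `b`: the equation of `b` depends on the value of `a`. -/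
def IsParent (M : CausalModel U V α) (a b : V) : Prop :=
  ∃ (u : U) (s s' : V → α), M.Setting s ∧ M.Setting s' ∧
    (∀ w, w ≠ a → s w = s' w) ∧ M.F b u s ≠ M.F b u s'

/-- `a` is only a parent of `b`: the single edge `a → b` is the only directed
path from `a` to `b`. -/
def OnlyParent (M : CausalModel U V α) (a b : V) : Prop :=
  M.IsParent a b ∧ ¬ ∃ z, M.IsParent a z ∧ Relation.TransGen M.IsParent z b

/-- `R` is the set of root variables: equations of members of `R` depend only on
the context, and equations of all other variables do not depend on the context
(exogenous variables appear only in equations of the form `V = U`). -/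
def IsRootSet (M : CausalModel U V α) (R : Set V) : Prop :=
  (∀ v ∈ R, ∀ (u : U) (s s' : V → α), M.F v u s = M.F v u s') ∧
  (∀ v ∉ R, ∀ (u u' : U) (s : V → α), M.F v u s = M.F v u' s)

/-- Def 2: contrastive necessity with actual strong sufficiency (AC1, AC2, AC3). -/
def CauseDef2 (M : CausalModel U V α) (u : U) (X : Set V) (x : V → α) (Y0 : V) (y : α) : Prop :=
  (∀ v ∈ X, M.actual u v = x v) ∧ M.actual u Y0 = y ∧
  (∃ (W N : Set V) (x' : V → α), Disjoint W (X ∪ {Y0}) ∧ (∀ v ∈ X, x' v ∈ M.rng v) ∧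
      M.actStronglySuffNet u (X ∪ W) (merge X x (M.actual u)) Y0 y N ∧
      ∀ S ⊆ N, ¬ M.actStronglySuffNet u (X ∪ W) (merge X x' (M.actual u)) Y0 y S) ∧
  (∀ X' ⊂ X, ¬ ∃ (W N : Set V) (x' : V → α), Disjoint W (X' ∪ {Y0}) ∧
      (∀ v ∈ X', x' v ∈ M.rng v) ∧
      M.actStronglySuffNet u (X' ∪ W) (merge X' x (M.actual u)) Y0 y N ∧
      ∀ S ⊆ N, ¬ M.actStronglySuffNet u (X' ∪ W) (merge X' x' (M.actual u)) Y0 y S)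

/-- Def 3: contrastive necessity with actual direct sufficiency (AC1, AC2, AC3). -/
def CauseDef3 (M : CausalModel U V α) (u : U) (X : Set V) (x : V → α) (Y0 : V) (y : α) : Prop :=
  (∀ v ∈ X, M.actual u v = x v) ∧ M.actual u Y0 = y ∧
  (∃ (W : Set V) (x' : V → α), Disjoint W (X ∪ {Y0}) ∧ (∀ v ∈ X, x' v ∈ M.rng v) ∧
      M.actDirectlySuff u (X ∪ W) (merge X x (M.actual u)) {Y0} (fun _ => y) ∧
      ¬ M.actDirectlySuff u (X ∪ W) (merge X x' (M.actual u)) {Y0} (fun _ => y)) ∧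
  (∀ X' ⊂ X, ¬ ∃ (W : Set V) (x' : V → α), Disjoint W (X' ∪ {Y0}) ∧
      (∀ v ∈ X', x' v ∈ M.rng v) ∧
      M.actDirectlySuff u (X' ∪ W) (merge X' x (M.actual u)) {Y0} (fun _ => y) ∧
      ¬ M.actDirectlySuff u (X' ∪ W) (merge X' x' (M.actual u)) {Y0} (fun _ => y))

/-- Def 4 (singleton cause): contrastive necessity with non-actual weak sufficiency. -/
def CauseDef4 (M : CausalModel U V α) (u : U) (X0 : V) (x0 : α) (Y0 : V) (y : α) : Prop :=
  M.actual u X0 = x0 ∧ M.actual u Y0 = y ∧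
  ∃ (W : Set V) (x' : α), Disjoint W ({X0} ∪ {Y0} : Set V) ∧ x' ∈ M.rng X0 ∧
    M.weaklySuff ({X0} ∪ W) (merge {X0} (fun _ => x0) (M.actual u)) {Y0} (fun _ => y) ∧
    ¬ M.weaklySuff ({X0} ∪ W) (merge {X0} (fun _ => x') (M.actual u)) {Y0} (fun _ => y)

/-- Def 8 (singleton cause): minimal necessity with actual strong sufficiency
(minimality AC3 is automatic for singletons). -/
def CauseDef8 (M : CausalModel U V α) (u : U) (X0 : V) (x0 : α) (Y0 : V) (y : α) : Prop :=
  M.actual u X0 = x0 ∧ M.actual u Y0 = y ∧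
  ∃ W N : Set V, Disjoint W ({X0} ∪ {Y0} : Set V) ∧
    M.actStronglySuffNet u ({X0} ∪ W) (merge {X0} (fun _ => x0) (M.actual u)) Y0 y N ∧
    ∀ S ⊆ N, ¬ M.actStronglySuffNet u W (M.actual u) Y0 y S

/-- Def 10 (singleton cause): minimal necessity with non-actual weak sufficiency. -/
def CauseDef10 (M : CausalModel U V α) (u : U) (X0 : V) (x0 : α) (Y0 : V) (y : α) : Prop :=
  M.actual u X0 = x0 ∧ M.actual u Y0 = y ∧
  ∃ W : Set V, Disjoint W ({X0} ∪ {Y0} : Set V) ∧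
    M.weaklySuff ({X0} ∪ W) (merge {X0} (fun _ => x0) (M.actual u)) {Y0} (fun _ => y) ∧
    ¬ M.weaklySuff W (M.actual u) {Y0} (fun _ => y)

end CausalModel

/-! The solution `s` of `[X⃗ ← x⃗]` in a context is itself an admissible choice of values for the
variables outside `X⃗ ∪ N⃗`, and by uniqueness of solutions, additionally intervening with the
values of `s` reproduces `s`. Strong sufficiency then forces `N⃗ = n⃗`, hence `Y⃗ = y⃗`, in `s`. -/

namespace CausalModel

section

variable {U V α : Type} (M : CausalModel U V α)

theorem setting_solve {X : Set V} {x : V → α} (hx : ∀ v ∈ X, x v ∈ M.rng v) (u : U) :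
    M.Setting (M.solve X x u) := by
  intro v
  by_cases hv : v ∈ X
  · rw [M.solve_mem X x u v hv]
    exact hx v hv
  · rw [M.solve_not_mem X x u v hv]
    exact M.F_rng v u _

theorem solve_solve_of_subset {X Z : Set V} (hXZ : X ⊆ Z) (x : V → α) (u : U) :
    M.solve Z (M.solve X x u) u = M.solve X x u :=
  (M.solve_unique Z _ u _ (fun _ _ => rfl)
    fun v hv => M.solve_not_mem X x u v fun hvX => hv (hXZ hvX)).symm

theorem weaklySuff_of_directlySuff {X N : Set V} {x n : V → α} (hx : ∀ v ∈ X, x v ∈ M.rng v)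
    (h : M.directlySuff X x N n) : M.weaklySuff X x N n := by
  intro u v hv
  have hN := h (M.solve X x u) (M.setting_solve hx u) (M.solve_mem X x u) u v hv
  rwa [M.solve_solve_of_subset Set.subset_union_left] at hN

end

theorem strong_implies_weak_general {U V α : Type} (M : CausalModel U V α)
    (X Y : Set V) (x y : V → α)
    (hx : ∀ v ∈ X, x v ∈ M.rng v)
    (h : M.stronglySuff X x Y y) : M.weaklySuff X x Y y := by
  obtain ⟨N, n, hYN, hny, hN⟩ := h
  intro u v hv
  rw [M.weaklySuff_of_directlySuff hx hN u v (hYN hv), hny v hv]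

/-- strong sufficiency implies weak sufficiency. -/
theorem strong_implies_weak {U V α : Type} (M : CausalModel U V α)
    (X Y : Set V) (x y : V → α)
    (hd : Disjoint X Y) (hX : X.Nonempty) (hY : Y.Nonempty)
    (hrng : ∀ v, (M.rng v).Nonempty) (hx : ∀ v ∈ X, x v ∈ M.rng v)
    (h : M.stronglySuff X x Y y) : M.weaklySuff X x Y y :=
  strong_implies_weak_general M X Y x y hx h

end CausalModel
end

section
/- Definition Def 7 (actual causation using minimal necessity combined with actual weak sufficiency) is unsatisfiable: no X⃗=x⃗ can be a cause of Y=y in any causal setting (M,u⃗) according to Def 7. -/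
open Classical

/-! The actual world satisfies every structural equation, so by uniqueness of solutions it is
also the solution after intervening `W⃗ ← w⃗*`. Hence `(M,u) ⊨ [W⃗ ← w⃗*] Y=y` holds whenever
`Y=y` holds actually, so AC1 already refutes AC2(aᵐ), whatever `W⃗` is. -/

namespace CausalModel

section

variable {U V α : Type} (M : CausalModel U V α) (u : U)

theorem actual_eq_F (v : V) : M.actual u v = M.F v u (M.actual u) := by
  rw [← M.actual_def (M.actual u) u]
  exact M.solve_not_mem ∅ _ u v (Set.notMem_empty v)

theorem solve_actual (W : Set V) : M.solve W (M.actual u) u = M.actual u :=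
  (M.solve_unique W _ u _ (fun _ _ => rfl) (fun v _ => M.actual_eq_F u v)).symm

theorem actWeaklySuff_actual_iff (W Y : Set V) (y : V → α) :
    M.actWeaklySuff u W (M.actual u) Y y ↔ ∀ v ∈ Y, M.actual u v = y v := by
  rw [actWeaklySuff, solve_actual]

end

theorem def7_unsatisfiable_general {U V α : Type} (M : CausalModel U V α) (u : U)
    (X : Set V) (x : V → α) (Y0 : V) (y : α)
    (hAC1y : M.actual u Y0 = y) :
    ¬ ∃ W : Set V, Disjoint W (X ∪ {Y0}) ∧
        M.actWeaklySuff u (X ∪ W) (merge X x (M.actual u)) {Y0} (fun _ => y) ∧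
        ¬ M.actWeaklySuff u W (M.actual u) {Y0} (fun _ => y) := by
  rintro ⟨W, -, -, hW⟩
  exact hW ((M.actWeaklySuff_actual_iff u W {Y0} _).2 fun v hv => hv ▸ hAC1y)

/-- Def 7 (minimal necessity + actual weak sufficiency) is
unsatisfiable: given AC1, there is no witness `W⃗` with
`(M,u) ⊨ [X⃗←x⃗, W⃗←w⃗*] Y=y` while `(M,u) ⊭ [W⃗←w⃗*] Y=y`. -/
theorem def7_unsatisfiable {U V α : Type} (M : CausalModel U V α) (u : U)
    (X : Set V) (x : V → α) (Y0 : V) (y : α) (hYX : Y0 ∉ X)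
    (hAC1x : ∀ v ∈ X, M.actual u v = x v) (hAC1y : M.actual u Y0 = y) :
    ¬ ∃ W : Set V, Disjoint W (X ∪ {Y0}) ∧
        M.actWeaklySuff u (X ∪ W) (merge X x (M.actual u)) {Y0} (fun _ => y) ∧
        ¬ M.actWeaklySuff u W (M.actual u) {Y0} (fun _ => y) :=
  def7_unsatisfiable_general M u X x Y0 y hAC1y

end CausalModel
end

section
/- The Modified HP definition of actual causation is equivalent to Def 1, the instance of the general NESS-style definition of causation using contrastive necessity and actual weak sufficiency. Precisely: X⃗=x⃗ satisfies Modified HP's AC2 for Y=y in (M,u⃗) iff there is a set W⃗ disjoint from X⃗∪{Y} and values x⃗' such that (X⃗=x⃗, W⃗=w⃗*) is actually weakly sufficient for Y=y while (X⃗=x⃗', W⃗=w⃗*) is not actually weakly sufficient for Y=y. -/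
open Classical

/-!
Holding variables at their actual values is a vacuous intervention: the actual world solves the
structural equations, so by uniqueness of solutions `[X⃗ ← x⃗, W⃗ ← w⃗*]` returns the actual world,
and the sufficiency half of Def 1 is automatic. Conversely a Modified HP witness `W⃗` cannot
contain `Y`, because `[X⃗ ← x⃗', W⃗ ← w⃗*]` would then pin `Y` to its actual value `y`.
-/

namespace CausalModel

section

variable {U V α : Type} (M : CausalModel U V α) (u : U)

theorem solve_eq_actual {Z : Set V} {g : V → α} (hg : ∀ v ∈ Z, g v = M.actual u v) :
    M.solve Z g u = M.actual u :=
  (M.solve_unique Z g u _ (fun v hv => (hg v hv).symm) fun v _ => M.actual_eq_F u v).symm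

theorem merge_eq_self {X : Set V} {x g : V → α} (h : ∀ v ∈ X, g v = x v) : merge X x g = g := by
  funext v
  by_cases hv : v ∈ X
  · simp only [merge, if_pos hv, h v hv]
  · simp only [merge, if_neg hv]

theorem solve_union_merge_apply {X W : Set V} {x g : V → α} {v : V} (hvW : v ∈ W) (hvX : v ∉ X) :
    M.solve (X ∪ W) (merge X x g) u v = g v := by
  rw [M.solve_mem _ _ u v (Or.inr hvW), merge, if_neg hvX]

theorem actWeaklySuff_singleton_iff {Z : Set V} {g : V → α} {Y0 : V} {y : α} :
    M.actWeaklySuff u Z g {Y0} (fun _ => y) ↔ M.solve Z g u Y0 = y := by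
  simp [actWeaklySuff]

end

theorem modifiedHP_iff_def1_general {U V α : Type} (M : CausalModel U V α) (u : U)
    (X : Set V) (x : V → α) (Y0 : V) (y : α)
    (hYX : Y0 ∉ X)
    (hAC1x : ∀ v ∈ X, M.actual u v = x v) (hAC1y : M.actual u Y0 = y) :
    (∃ (W : Set V) (x' : V → α), W ⊆ Xᶜ ∧ (∀ v ∈ X, x' v ∈ M.rng v) ∧
        ¬ M.actWeaklySuff u (X ∪ W) (merge X x' (M.actual u)) {Y0} (fun _ => y)) ↔
      (∃ (W : Set V) (x' : V → α), Disjoint W (X ∪ {Y0}) ∧ (∀ v ∈ X, x' v ∈ M.rng v) ∧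
        M.actWeaklySuff u (X ∪ W) (merge X x (M.actual u)) {Y0} (fun _ => y) ∧
        ¬ M.actWeaklySuff u (X ∪ W) (merge X x' (M.actual u)) {Y0} (fun _ => y)) := by
  constructor
  · rintro ⟨W, x', hWX, hx', hnot⟩
    have hY0W : Y0 ∉ W := fun hY0W => hnot <| (M.actWeaklySuff_singleton_iff u).2 <| by
      rw [M.solve_union_merge_apply u hY0W hYX, hAC1y]
    have hsuff : M.actWeaklySuff u (X ∪ W) (merge X x (M.actual u)) {Y0} (fun _ => y) := by
      rw [actWeaklySuff_singleton_iff, merge_eq_self hAC1x, M.solve_eq_actual u fun _ _ => rfl,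
        hAC1y]
    refine ⟨W, x', ?_, hx', hsuff, hnot⟩
    exact Set.disjoint_union_right.2
      ⟨Set.subset_compl_iff_disjoint_right.1 hWX, Set.disjoint_singleton_right.2 hY0W⟩
  · rintro ⟨W, x', hdisj, hx', -, hnot⟩
    exact ⟨W, x', Set.subset_compl_iff_disjoint_right.2 (Set.disjoint_union_right.1 hdisj).1,
      hx', hnot⟩

/-- Modified HP is equivalent to Def 1 (contrastive necessity with
actual weak sufficiency).  Given AC1, the Modified HP condition AC2 (some
witness `W⃗ ⊆ V ∖ X⃗` held at its actual values `w⃗*` and contrast values `x⃗'`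
with `(M,u) ⊨ [X⃗←x⃗', W⃗←w⃗*] Y ≠ y`) holds iff there are `W⃗` disjoint from
`X⃗ ∪ {Y}` and contrast values `x⃗'` such that `(X⃗=x⃗, W⃗=w⃗*)` is actually weakly
sufficient for `Y=y` while `(X⃗=x⃗', W⃗=w⃗*)` is not. -/
theorem modifiedHP_iff_def1 {U V α : Type} (M : CausalModel U V α) (u : U)
    (X : Set V) (x : V → α) (Y0 : V) (y : α)
    (hYX : Y0 ∉ X) (hX : X.Nonempty)
    (hAC1x : ∀ v ∈ X, M.actual u v = x v) (hAC1y : M.actual u Y0 = y) :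
    (∃ (W : Set V) (x' : V → α), W ⊆ Xᶜ ∧ (∀ v ∈ X, x' v ∈ M.rng v) ∧
        ¬ M.actWeaklySuff u (X ∪ W) (merge X x' (M.actual u)) {Y0} (fun _ => y)) ↔
      (∃ (W : Set V) (x' : V → α), Disjoint W (X ∪ {Y0}) ∧ (∀ v ∈ X, x' v ∈ M.rng v) ∧
        M.actWeaklySuff u (X ∪ W) (merge X x (M.actual u)) {Y0} (fun _ => y) ∧
        ¬ M.actWeaklySuff u (X ∪ W) (merge X x' (M.actual u)) {Y0} (fun _ => y)) :=
  modifiedHP_iff_def1_general M u X x Y0 y hYX hAC1x hAC1y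

end CausalModel
end

section
/- In models where every exogenous variable appears only in equations of the form V = U (so the 'root' endogenous variables R⃗ copy the exogenous variables), if we intervene on all root variables R⃗ with values r⃗, then there is a unique setting v⃗ of all endogenous variables V such that for every context u⃗, (M,u⃗) ⊨ [R⃗←r⃗] V=v⃗. -/
open Classical

namespace CausalModel

section

variable {U V α : Type}

theorem solve_eq_solve_of_F_eq (M : CausalModel U V α) {Z : Set V} {g : V → α} {u u' : U}
    (hF : ∀ v ∉ Z, ∀ s : V → α, M.F v u s = M.F v u' s) :
    M.solve Z g u = M.solve Z g u' :=
  M.solve_unique Z g u' _ (M.solve_mem Z g u) fun v hv => by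
    rw [M.solve_not_mem Z g u v hv, hF v hv]

theorem IsRootSet.solve_eq_solve {M : CausalModel U V α} {R : Set V} (hR : M.IsRootSet R)
    (r : V → α) (u u' : U) : M.solve R r u = M.solve R r u' :=
  M.solve_eq_solve_of_F_eq fun v hv s => hR.2 v hv u u' s

end

/-- in models whose exogenous variables appear only in root
equations `V = U`, intervening on all root variables `R⃗ ← r⃗` determines a
unique setting `v⃗` of all endogenous variables, the same in every context. -/
theorem root_intervention_determines {U V α : Type} [Nonempty U]
    (M : CausalModel U V α) (R : Set V) (hR : M.IsRootSet R) (r : V → α) :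
    ∃! vv : V → α, ∀ u : U, M.solve R r u = vv := by
  obtain ⟨u₀⟩ := ‹Nonempty U›
  exact ⟨M.solve R r u₀, fun u => hR.solve_eq_solve r u u₀, fun vv hvv => (hvv u₀).symm⟩

end CausalModel
end

section
/- Under the restriction that exogenous variables appear only in equations of the form V=U (with root variables R⃗), for any setting X⃗=x⃗, any setting N⃗=n⃗ containing Y=y with N⃗ ∩ R⃗ = ∅, and any context u⃗: X⃗=x⃗ is actually directly sufficient for Y=y in (M,u⃗) iff X⃗=x⃗ is directly sufficient for Y=y in M; and X⃗=x⃗ is actually strongly sufficient for Y=y in (M,u⃗) along N⃗=n⃗ iff X⃗=x⃗ is strongly sufficient for Y=y in M along N⃗=n⃗. -/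
open Classical

/-! Direct sufficiency intervenes on every variable outside `X⃗ ∪ N⃗`, hence on every root.
The variables left free are non-roots, whose equations ignore the context, so the solution of
the intervened model is the same in all contexts: sufficiency in one context is sufficiency
in all. -/

namespace CausalModel

variable {U V α : Type} {M : CausalModel U V α} {R : Set V}

theorem IsRootSet.solve_eq (hR : M.IsRootSet R) {Z : Set V} (hZR : Disjoint Zᶜ R)
    (g : V → α) (u u' : U) : M.solve Z g u = M.solve Z g u' :=
  M.solve_unique Z g u' _ (M.solve_mem Z g u) fun v hv => by
    rw [M.solve_not_mem Z g u v hv]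
    exact hR.2 v (hZR.notMem_of_mem_left hv) u u' _

theorem compl_union_compl_union_subset (X N : Set V) : (X ∪ (X ∪ N)ᶜ)ᶜ ⊆ N := by
  rw [Set.compl_union, compl_compl]
  exact fun v ⟨hvX, hvXN⟩ => hvXN.resolve_left hvX

theorem IsRootSet.actDirectlySuff_iff (hR : M.IsRootSet R) {N : Set V} (hNR : Disjoint N R)
    (u : U) (X : Set V) (x n : V → α) :
    M.actDirectlySuff u X x N n ↔ M.directlySuff X x N n := by
  refine ⟨fun h g hg hgX u' => ?_, fun h g hg hgX => h g hg hgX u⟩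
  rw [hR.solve_eq (hNR.mono_left (compl_union_compl_union_subset X N)) g u' u]
  exact h g hg hgX

theorem actual_iff_nonactual_suff_general {U V α : Type} (M : CausalModel U V α)
    (R : Set V) (hR : M.IsRootSet R) (X : Set V) (x : V → α)
    (Y0 : V) (y : α) (N : Set V) (n : V → α) (u : U)
    (hY0 : Y0 ∈ N) (hNR : N ∩ R = ∅) :
    (M.actDirectlySuff u X x {Y0} (fun _ => y) ↔ M.directlySuff X x {Y0} (fun _ => y)) ∧
    (M.actDirectlySuff u X x N n ↔ M.directlySuff X x N n) := by
  have hNR : Disjoint N R := Set.disjoint_iff_inter_eq_empty.mpr hNR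
  have hYR : Disjoint {Y0} R := hNR.mono_left (Set.singleton_subset_iff.mpr hY0)
  exact ⟨hR.actDirectlySuff_iff hYR u X x _, hR.actDirectlySuff_iff hNR u X x n⟩

/-- under the root-variable restriction, for any `N⃗=n⃗` containing
`Y=y` with `N⃗ ∩ R⃗ = ∅` and any context `u`: actual direct sufficiency of
`X⃗=x⃗` for `Y=y` in `(M,u)` coincides with direct sufficiency in `M`, and
actual strong sufficiency along `N⃗=n⃗` coincides with strong sufficiency along
`N⃗=n⃗` (i.e. (actual) direct sufficiency for `N⃗=n⃗`). -/
theorem actual_iff_nonactual_suff {U V α : Type} (M : CausalModel U V α)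
    (R : Set V) (hR : M.IsRootSet R) (X : Set V) (x : V → α)
    (Y0 : V) (y : α) (N : Set V) (n : V → α) (u : U)
    (hY0 : Y0 ∈ N) (hn : n Y0 = y) (hNR : N ∩ R = ∅) (hYX : Y0 ∉ X) :
    (M.actDirectlySuff u X x {Y0} (fun _ => y) ↔ M.directlySuff X x {Y0} (fun _ => y)) ∧
    (M.actDirectlySuff u X x N n ↔ M.directlySuff X x N n) :=
  actual_iff_nonactual_suff_general M R hR X x Y0 y N n u hY0 hNR

end CausalModel
end

section
/- Def 6 is equivalent to Def 12: contrastive necessity and minimal necessity coincide when combined with direct sufficiency. Precisely, given a candidate cause X⃗=x⃗ with witness W⃗=w⃗* such that (X⃗=x⃗, W⃗=w⃗*) is directly sufficient for Y=y, the following are equivalent: (i) W⃗=w⃗* is not directly sufficient for Y=y; (ii) there exist values x⃗' of X⃗ such that (X⃗=x⃗', W⃗=w⃗*) is not directly sufficient for Y=y. -/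
open Classical

/-! Since `Y` lies outside `X⃗ ∪ W⃗`, both sufficiency claims intervene on every variable except `Y`;
they differ only in which settings are quantified over: those agreeing with `w⃗*` on `W⃗`, or those
agreeing with `(x⃗', w⃗*)` on `X⃗ ∪ W⃗`. The latter are among the former, and conversely a setting
refuting the former refutes the latter once its own values on `X⃗` are taken as `x⃗'`. -/

namespace CausalModel

variable {U V α : Type} (M : CausalModel U V α)

@[simp]
theorem merge_of_mem {X : Set V} {x g : V → α} {v : V} (hv : v ∈ X) : merge X x g v = x v :=
  if_pos hv

@[simp]
theorem merge_of_notMem {X : Set V} {x g : V → α} {v : V} (hv : v ∉ X) : merge X x g v = g v :=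
  if_neg hv

theorem union_compl_union_eq_compl {Z Y : Set V} (h : Disjoint Z Y) : Z ∪ (Z ∪ Y)ᶜ = Yᶜ := by
  ext v
  have : v ∈ Z → v ∉ Y := fun hv => Set.disjoint_left.mp h hv
  simp only [Set.mem_union, Set.mem_compl_iff]
  tauto

theorem directlySuff_iff_of_disjoint {Z Y : Set V} {z y : V → α} (h : Disjoint Z Y) :
    M.directlySuff Z z Y y ↔
      ∀ g, M.Setting g → (∀ v ∈ Z, g v = z v) → ∀ u, ∀ v ∈ Y, M.solve Yᶜ g u v = y v := by
  rw [directlySuff, union_compl_union_eq_compl h]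

variable {M}

theorem directlySuff.mono {Z Z' Y : Set V} {z z' y : V → α} (hs : M.directlySuff Z z Y y)
    (hZ : Z ⊆ Z') (hz : ∀ v ∈ Z, z' v = z v) (hZ'Y : Disjoint Z' Y) :
    M.directlySuff Z' z' Y y := by
  rw [directlySuff_iff_of_disjoint M hZ'Y]
  rw [directlySuff_iff_of_disjoint M (hZ'Y.mono_left hZ)] at hs
  intro g hg hgz
  exact hs g hg fun v hv => (hgz v (hZ hv)).trans (hz v hv)

theorem def6_iff_def12_general {U V α : Type} (M : CausalModel U V α)
    (X W : Set V) (w : V → α) (Y0 : V) (y : α)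
    (hd : Disjoint X W) (hYX : Y0 ∉ X) (hYW : Y0 ∉ W) :
    (¬ M.directlySuff W w {Y0} (fun _ => y)) ↔
      ∃ x' : V → α, (∀ v ∈ X, x' v ∈ M.rng v) ∧
        ¬ M.directlySuff (X ∪ W) (merge X x' w) {Y0} (fun _ => y) := by
  have hWY : Disjoint W {Y0} := Set.disjoint_singleton_right.mpr hYW
  have hXWY : Disjoint (X ∪ W) {Y0} := Set.disjoint_singleton_right.mpr (by simp [hYX, hYW])
  constructor
  · intro hnot
    rw [directlySuff_iff_of_disjoint M hWY] at hnot
    push Not at hnot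
    obtain ⟨g, hg, hgw, u, v, hv, hne⟩ := hnot
    have hg_merge : ∀ v ∈ X ∪ W, g v = merge X g w v := by
      rintro v (hvX | hvW)
      · simp [hvX]
      · simp [hd.notMem_of_mem_right hvW, hgw v hvW]
    exact ⟨g, fun v _ => hg v, fun hsuf =>
      hne ((directlySuff_iff_of_disjoint M hXWY).mp hsuf g hg hg_merge u v hv)⟩
  · rintro ⟨x', -, hnot⟩ hsuf
    exact hnot (hsuf.mono Set.subset_union_right
      (fun v hv => merge_of_notMem (hd.notMem_of_mem_right hv)) hXWY)

/-- Def 6 ≡ Def 12: given that `(X⃗=x⃗, W⃗=w⃗*)` is directly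
sufficient for `Y=y`, the witness alone failing to be directly sufficient
(minimal necessity) is equivalent to the existence of contrast values `x⃗'`
such that `(X⃗=x⃗', W⃗=w⃗*)` is not directly sufficient (contrastive necessity). -/
theorem def6_iff_def12 {U V α : Type} (M : CausalModel U V α)
    (X W : Set V) (x w : V → α) (Y0 : V) (y : α)
    (hd : Disjoint X W) (hYX : Y0 ∉ X) (hYW : Y0 ∉ W) (hX : X.Nonempty)
    (hrng : ∀ v, (M.rng v).Nonempty) (hw : ∀ v ∈ W, w v ∈ M.rng v)
    (hsuf : M.directlySuff (X ∪ W) (merge X x w) {Y0} (fun _ => y)) :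
    (¬ M.directlySuff W w {Y0} (fun _ => y)) ↔
      ∃ x' : V → α, (∀ v ∈ X, x' v ∈ M.rng v) ∧
        ¬ M.directlySuff (X ∪ W) (merge X x' w) {Y0} (fun _ => y) :=
  def6_iff_def12_general M X W w Y0 y hd hYX hYW

end CausalModel
end

section
/- If X⃗=x⃗ causes Y=y in (M,u⃗) according to any of the definitions of actual causation that use minimal necessity (Def 8, Def 10, with Def 3 as the direct-sufficiency case), then X⃗ is a singleton. -/
open Classical

namespace CausalModel

/-- The general scheme of actual causation with *minimal* necessity, relative
to an abstract sufficiency notion `suff Z⃗ z⃗ S⃗` ("`Z⃗=z⃗` is sufficient for the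
effect along the network `S⃗`"): AC1, AC2(b) (witness `W⃗` at actual values and
network `N⃗`), AC2(aᵐ) (for all `S⃗ ⊆ N⃗`, the witness alone is not sufficient
along `S⃗`), and AC3 (minimality). -/
def CauseMin {U V α : Type} (M : CausalModel U V α) (u : U)
    (suff : Set V → (V → α) → Set V → Prop) (X : Set V) (x : V → α) (Y0 : V) : Prop :=
  (∀ v ∈ X, M.actual u v = x v) ∧
  (∃ W N : Set V, Disjoint W (X ∪ {Y0}) ∧
      suff (X ∪ W) (merge X x (M.actual u)) N ∧
      ∀ S ⊆ N, ¬ suff W (M.actual u) S) ∧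
  (∀ X' ⊂ X, ¬ ∃ W N : Set V, Disjoint W (X' ∪ {Y0}) ∧
      suff (X' ∪ W) (merge X' x (M.actual u)) N ∧
      ∀ S ⊆ N, ¬ suff W (M.actual u) S)

section MinimalNecessity

variable {U V α : Type} {M : CausalModel U V α} {u : U}
  {suff : Set V → (V → α) → Set V → Prop} {X : Set V} {x : V → α} {Y0 : V}

theorem merge_eq_right_of_eqOn {Z : Set V} {g : V → α} (h : Set.EqOn x g Z) :
    merge Z x g = g :=
  funext fun _ => ite_eq_right_iff.2 fun hv => h hv

variable (M u suff) in
/-- Conditions AC2(b) and AC2(aᵐ) of `CauseMin`. -/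
def AC2Min (X : Set V) (x : V → α) (Y0 : V) : Prop :=
  ∃ W N : Set V, Disjoint W (X ∪ {Y0}) ∧
    suff (X ∪ W) (merge X x (M.actual u)) N ∧
    ∀ S ⊆ N, ¬ suff W (M.actual u) S

/-- Either `X \ X₁` is already sufficient together with the old witness `W` (along a subnetwork),
or it is not, and then it can be moved into the witness of `X₁`. -/
theorem AC2Min.sdiff_or_of_subset (h : AC2Min M u suff X x Y0)
    (hact : ∀ v ∈ X, M.actual u v = x v) (hYX : Y0 ∉ X) {X₁ : Set V} (hX₁ : X₁ ⊆ X) :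
    AC2Min M u suff (X \ X₁) x Y0 ∨ AC2Min M u suff X₁ x Y0 := by
  obtain ⟨W, N, hdisj, hsuff, hmin⟩ := h
  have merge_actual : ∀ Z ⊆ X, merge Z x (M.actual u) = M.actual u := fun Z hZ =>
    merge_eq_right_of_eqOn fun v hv => (hact v (hZ hv)).symm
  by_cases hrest : ∃ S ⊆ N, suff (W ∪ X \ X₁) (M.actual u) S
  · obtain ⟨S, hSN, hS⟩ := hrest
    refine Or.inl ⟨W, S, hdisj.mono_right (Set.union_subset_union_left _ Set.sdiff_subset), ?_,
      fun S' hS' => hmin S' (hS'.trans hSN)⟩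
    rwa [merge_actual _ Set.sdiff_subset, Set.union_comm]
  · push Not at hrest
    refine Or.inr ⟨W ∪ X \ X₁, N, ?_, ?_, hrest⟩
    · exact Set.disjoint_union_left.2 ⟨hdisj.mono_right (Set.union_subset_union_left _ hX₁),
        Set.disjoint_union_right.2
          ⟨Set.disjoint_sdiff_left, Set.disjoint_singleton_right.2 fun h => hYX h.1⟩⟩
    · rwa [merge_actual _ hX₁, Set.union_left_comm, Set.union_sdiff_cancel hX₁, Set.union_comm,
        ← merge_actual X subset_rfl]

theorem CauseMin.exists_eq_singleton (h : CauseMin M u suff X x Y0) (hne : X.Nonempty)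
    (hYX : Y0 ∉ X) : ∃ X0, X = {X0} := by
  obtain ⟨hact, hac2, hac3⟩ := h
  refine Set.exists_eq_singleton_iff_nonempty_subsingleton.2 ⟨hne, fun X0 h0 X1 h1 => ?_⟩
  by_contra hne01
  rcases AC2Min.sdiff_or_of_subset hac2 hact hYX (Set.singleton_subset_iff.2 h0) with hrest | hsingle
  · exact hac3 _ (Set.sdiff_singleton_ssubset.2 h0) hrest
  · exact hac3 _ ⟨Set.singleton_subset_iff.2 h0, fun hX => hne01 (hX h1).symm⟩ hsingle

end MinimalNecessity

/-- any cause according to a definition using minimal necessity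
(Def 3/9: actual direct sufficiency; Def 10: weak sufficiency; Def 8: actual
strong sufficiency) is a singleton. -/
theorem minimal_necessity_singleton {U V α : Type} (M : CausalModel U V α)
    (u : U) (X : Set V) (x : V → α) (Y0 : V) (y : α)
    (hne : X.Nonempty) (hYX : Y0 ∉ X) :
    (CauseMin M u (fun Z z S => S = {Y0} ∧ M.actDirectlySuff u Z z {Y0} (fun _ => y)) X x Y0 →
        ∃ X0, X = {X0}) ∧
    (CauseMin M u (fun Z z S => S = {Y0} ∧ M.weaklySuff Z z {Y0} (fun _ => y)) X x Y0 →
        ∃ X0, X = {X0}) ∧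
    (CauseMin M u (fun Z z S => M.actStronglySuffNet u Z z Y0 y S) X x Y0 →
        ∃ X0, X = {X0}) :=
  ⟨fun h => h.exists_eq_singleton hne hYX, fun h => h.exists_eq_singleton hne hYX,
    fun h => h.exists_eq_singleton hne hYX⟩

end CausalModel
end

section
/- If X⃗=x⃗ causes Y=y in (M,u⃗) according to Def 3 (contrastive necessity with actual direct sufficiency), then X⃗ is a singleton {X} and X is a parent of Y in M. -/
open Classical

namespace CausalModel

/-!
Once every variable other than `Y` is set by intervention, `Y` takes the value of its structural
equation, so actual direct sufficiency of `X⃗ ∪ W⃗` for `Y = y` only says that `F_Y` returns `y` on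
every setting agreeing with the actual world on `X⃗ ∪ W⃗`. Quantifying over the contrast values
`x⃗'` turns AC2 into: this holds for `X⃗ ∪ W⃗` but fails for `W⃗` alone. Minimality (AC3) then shows
that for each `b ∈ X⃗` the set `{b} ∪ W⃗` already suffices: otherwise `X⃗ \ {b}`, with `b` moved
into `W⃗`, would satisfy AC2. In particular `{b}` satisfies AC2, so `X⃗ = {b}`, and a setting on
which `F_Y` fails to return `y` with `W⃗` actual, once its `b`-value is reset to the actual one,
makes `F_Y` return `y`: hence `b` is a parent of `Y`.
-/

variable {U V α : Type}

lemma merge_eq_self_of_eqOn {X : Set V} {x s : V → α} (h : Set.EqOn s x X) :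
    merge X x s = s := by
  funext v
  unfold merge
  split_ifs with hv
  exacts [(h hv).symm, rfl]

lemma eqOn_merge_union_iff {X W : Set V} {x s g : V → α} (hWX : Disjoint W X) :
    Set.EqOn g (merge X x s) (X ∪ W) ↔ Set.EqOn g x X ∧ Set.EqOn g s W := by
  have hX : Set.EqOn (merge X x s) x X := fun v hv => if_pos hv
  have hW : Set.EqOn (merge X x s) s W := fun v hv => if_neg (Set.disjoint_left.1 hWX hv)
  rw [Set.eqOn_union]
  exact and_congr ⟨fun h => h.trans hX, fun h => h.trans hX.symm⟩
    ⟨fun h => h.trans hW, fun h => h.trans hW.symm⟩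

variable (M : CausalModel U V α) (u : U)

lemma actual_mem_rng (v : V) : M.actual u v ∈ M.rng v := by
  rw [← M.actual_def (M.actual u) u, M.solve_not_mem ∅ _ u v (Set.notMem_empty v)]
  exact M.F_rng v u _

lemma solve_apply_eq_F {Z : Set V} (g : V → α) {Y0 : V} (hY : Y0 ∉ Z)
    (hZ : ∀ w, w ≠ Y0 → w ∈ Z) : M.solve Z g u Y0 = M.F Y0 u g := by
  rw [M.solve_not_mem Z g u Y0 hY]
  exact M.F_self _ _ _ _ fun w hw => M.solve_mem Z g u w (hZ w hw)

def Forces (A : Set V) (s : V → α) (Y0 : V) (y : α) : Prop :=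
  ∀ g, M.Setting g → Set.EqOn g s A → M.F Y0 u g = y

variable {M u}

lemma actDirectlySuff_singleton_iff {A : Set V} {s : V → α} {Y0 : V} {y : α} (hY : Y0 ∉ A) :
    M.actDirectlySuff u A s {Y0} (fun _ => y) ↔ M.Forces u A s Y0 y := by
  have hsolve : ∀ g, M.solve (A ∪ (A ∪ {Y0})ᶜ) g u Y0 = M.F Y0 u g := fun g =>
    M.solve_apply_eq_F u g (by simp [hY]) fun w hw => by by_cases hwA : w ∈ A <;> simp [hwA, hw]
  simp only [actDirectlySuff, Forces, Set.mem_singleton_iff, forall_eq, hsolve]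
  rfl

lemma exists_not_forces_merge_iff {X W : Set V} {s : V → α} {Y0 : V} {y : α}
    (hWX : Disjoint W X) :
    (∃ x' : V → α, (∀ v ∈ X, x' v ∈ M.rng v) ∧ ¬ M.Forces u (X ∪ W) (merge X x' s) Y0 y) ↔
      ¬ M.Forces u W s Y0 y := by
  simp only [Forces, eqOn_merge_union_iff hWX, not_forall, exists_prop]
  constructor
  · rintro ⟨x', -, g, hg, ⟨-, hgW⟩, hF⟩
    exact ⟨g, hg, hgW, hF⟩
  · rintro ⟨g, hg, hgW, hF⟩
    exact ⟨g, fun v _ => hg v, g, hg, ⟨Set.eqOn_refl g X, hgW⟩, hF⟩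

variable (M u)

/-- AC2 of Def 3 in its minimal-necessity form. -/
def ActDirectlyNecessary (X : Set V) (Y0 : V) (y : α) : Prop :=
  ∃ W, Disjoint W (X ∪ {Y0}) ∧ M.Forces u (X ∪ W) (M.actual u) Y0 y ∧
    ¬ M.Forces u W (M.actual u) Y0 y

variable {M u}

lemma def3AC2_iff_actDirectlyNecessary {X : Set V} {x : V → α} {Y0 : V} {y : α} (hY : Y0 ∉ X)
    (hX : ∀ v ∈ X, M.actual u v = x v) :
    (∃ (W : Set V) (x' : V → α), Disjoint W (X ∪ {Y0}) ∧ (∀ v ∈ X, x' v ∈ M.rng v) ∧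
      M.actDirectlySuff u (X ∪ W) (merge X x (M.actual u)) {Y0} (fun _ => y) ∧
      ¬ M.actDirectlySuff u (X ∪ W) (merge X x' (M.actual u)) {Y0} (fun _ => y)) ↔
      M.ActDirectlyNecessary u X Y0 y := by
  refine exists_congr fun W => ?_
  rw [merge_eq_self_of_eqOn fun v hv => hX v hv]
  by_cases hWd : Disjoint W (X ∪ {Y0})
  · have hYXW : Y0 ∉ X ∪ W := fun h => h.elim hY fun hW => Set.disjoint_left.1 hWd hW (Or.inr rfl)
    simp only [hWd, true_and, actDirectlySuff_singleton_iff hYXW,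
      ← exists_not_forces_merge_iff (Set.disjoint_union_right.1 hWd).1]
    constructor
    · rintro ⟨x', hx', hsuff, hnsuff⟩
      exact ⟨hsuff, x', hx', hnsuff⟩
    · rintro ⟨hsuff, x', hx', hnsuff⟩
      exact ⟨x', hx', hsuff, hnsuff⟩
  · exact iff_of_false (fun ⟨_, h, _⟩ => hWd h) fun ⟨h, _⟩ => hWd h

lemma causeDef3_iff {X : Set V} {x : V → α} {Y0 : V} {y : α} (hY : Y0 ∉ X) :
    M.CauseDef3 u X x Y0 y ↔ (∀ v ∈ X, M.actual u v = x v) ∧ M.actual u Y0 = y ∧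
      M.ActDirectlyNecessary u X Y0 y ∧ ∀ X' ⊂ X, ¬ M.ActDirectlyNecessary u X' Y0 y :=
  and_congr_right fun hX => and_congr_right fun _ =>
    and_congr (def3AC2_iff_actDirectlyNecessary hY hX) <| forall₂_congr fun _ hX' =>
      not_congr <| def3AC2_iff_actDirectlyNecessary (fun h => hY (hX'.1 h))
        fun v hv => hX v (hX'.1 hv)

lemma ActDirectlyNecessary.nonempty {X : Set V} {Y0 : V} {y : α}
    (h : M.ActDirectlyNecessary u X Y0 y) : X.Nonempty := by
  obtain ⟨W, -, hsuff, hnsuff⟩ := h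
  rw [Set.nonempty_iff_ne_empty]
  rintro rfl
  exact hnsuff (by rwa [Set.empty_union] at hsuff)

lemma forces_insert_of_minimal {X W : Set V} {Y0 : V} {y : α} {b : V} (hY : Y0 ∉ X)
    (hmin : ∀ X' ⊂ X, ¬ M.ActDirectlyNecessary u X' Y0 y) (hWd : Disjoint W (X ∪ {Y0}))
    (hsuff : M.Forces u (X ∪ W) (M.actual u) Y0 y) (hb : b ∈ X) :
    M.Forces u (insert b W) (M.actual u) Y0 y := by
  by_contra hnsuff
  have hssub : X \ {b} ⊂ X := Set.sdiff_singleton_ssubset.2 hb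
  have hunion : X \ {b} ∪ insert b W = X ∪ W := by
    rw [Set.union_insert, ← Set.insert_union, Set.insert_sdiff_singleton, Set.insert_eq_of_mem hb]
  refine hmin _ hssub ⟨insert b W, ?_, hunion ▸ hsuff, hnsuff⟩
  have hbY : b ≠ Y0 := fun h => hY (h ▸ hb)
  refine Set.disjoint_insert_left.2 ⟨by simp [hbY], ?_⟩
  exact hWd.mono_right (Set.union_subset_union_left _ Set.sdiff_subset)

lemma isParent_of_forces_insert {W : Set V} {s : V → α} {a Y0 : V} {y : α}
    (hsuff : M.Forces u (insert a W) s Y0 y) (hnsuff : ¬ M.Forces u W s Y0 y)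
    (ha : s a ∈ M.rng a) : M.IsParent a Y0 := by
  obtain ⟨g, hg, hgW, hF⟩ : ∃ g, M.Setting g ∧ Set.EqOn g s W ∧ M.F Y0 u g ≠ y := by
    simpa [Forces] using hnsuff
  have hg' : M.Setting (Function.update g a (s a)) :=
    (Function.forall_update_iff g fun v w => w ∈ M.rng v).2 ⟨ha, fun v _ => hg v⟩
  refine ⟨u, Function.update g a (s a), g, hg', hg, fun w hw => Function.update_of_ne hw _ _, ?_⟩
  rw [hsuff _ hg' ?_]
  · exact fun h => hF h.symm
  · rintro v (rfl | hv)
    · exact Function.update_self _ _ _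
    · rcases eq_or_ne v a with rfl | hva
      · exact Function.update_self _ _ _
      · rw [Function.update_of_ne hva]
        exact hgW hv

theorem def3_singleton_parent_general {U V α : Type} (M : CausalModel U V α) (u : U)
    (X : Set V) (x : V → α) (Y0 : V) (y : α)
    (hYX : Y0 ∉ X)
    (h : CauseDef3 M u X x Y0 y) :
    ∃ X0, X = {X0} ∧ M.IsParent X0 Y0 := by
  obtain ⟨-, -, hnec, hmin⟩ := (causeDef3_iff hYX).1 h
  obtain ⟨a, ha⟩ := hnec.nonempty
  obtain ⟨W, hWd, hsuff, hnsuff⟩ := hnec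
  have hsuff_a := forces_insert_of_minimal hYX hmin hWd hsuff ha
  have hXa : X = {a} := by
    have haX : {a} ⊆ X := Set.singleton_subset_iff.2 ha
    by_contra hne
    refine hmin {a} (haX.ssubset_of_ne (Ne.symm hne)) ⟨W, ?_, by rwa [Set.singleton_union], hnsuff⟩
    exact hWd.mono_right (Set.union_subset_union_left _ haX)
  exact ⟨a, hXa, isParent_of_forces_insert hsuff_a hnsuff (M.actual_mem_rng u a)⟩

/-- a cause according to Def 3 (contrastive necessity with actual
direct sufficiency) is a singleton `{X}` with `X` a parent of `Y`. -/
theorem def3_singleton_parent {U V α : Type} (M : CausalModel U V α) (u : U)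
    (X : Set V) (x : V → α) (Y0 : V) (y : α)
    (hYX : Y0 ∉ X) (hne : X.Nonempty)
    (h : CauseDef3 M u X x Y0 y) :
    ∃ X0, X = {X0} ∧ M.IsParent X0 Y0 :=
  def3_singleton_parent_general M u X x Y0 y hYX h

end CausalModel
end

section
/- If X=x causes Y=y in (M,u⃗) according to Def 3 (contrastive necessity with actual direct sufficiency), then X=x causes Y=y according to Def 2 (contrastive necessity with actual strong sufficiency). -/
open Classical

/-!
Take the trivial network `N⃗ = {Y}`. Its only subnetwork containing `Y` is `{Y}` itself, and
actual strong sufficiency along `{Y}` is actual direct sufficiency, so the Def 3 witness is a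
Def 2 witness. Minimality is automatic: the only proper subset of a singleton cause is `∅`,
for which the contrasted settings `x` and `x'` coincide.
-/

namespace CausalModel

variable {U V α : Type} (M : CausalModel U V α) (u : U)

@[simp]
lemma merge_empty (x g : V → α) : merge ∅ x g = g := by
  funext v
  simp [merge]

lemma actStronglySuffNet_singleton_iff {X : Set V} {x : V → α} {Y0 : V} {y : α} :
    M.actStronglySuffNet u X x Y0 y {Y0} ↔ M.actDirectlySuff u X x {Y0} (fun _ => y) := by
  constructor
  · rintro ⟨n, -, rfl, hn⟩ g hg hgX v rfl
    exact hn g hg hgX v rfl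
  · exact fun h => ⟨fun _ => y, rfl, rfl, h⟩

lemma actDirectlySuff_of_actStronglySuffNet_of_subset_singleton {X S : Set V} {x : V → α}
    {Y0 : V} {y : α} (hS : S ⊆ {Y0}) (h : M.actStronglySuffNet u X x Y0 y S) :
    M.actDirectlySuff u X x {Y0} (fun _ => y) := by
  obtain rfl : S = {Y0} := Set.eq_singleton_iff_unique_mem.mpr ⟨h.choose_spec.1, hS⟩
  exact (M.actStronglySuffNet_singleton_iff u).mp h

theorem def3_implies_def2_general {U V α : Type} (M : CausalModel U V α) (u : U)
    (X0 : V) (x0 : α) (Y0 : V) (y : α)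
    (h : CauseDef3 M u {X0} (fun _ => x0) Y0 y) :
    CauseDef2 M u {X0} (fun _ => x0) Y0 y := by
  obtain ⟨hX, hY, ⟨W, x', hdisj, hrng, hsuff, hnot⟩, -⟩ := h
  refine ⟨hX, hY, ⟨W, {Y0}, x', hdisj, hrng, ?_, ?_⟩, ?_⟩
  · exact (M.actStronglySuffNet_singleton_iff u).mpr hsuff
  · exact fun S hS hS' =>
      hnot (M.actDirectlySuff_of_actStronglySuffNet_of_subset_singleton u hS hS')
  · intro X' hX'
    obtain rfl := Set.ssubset_singleton_iff.mp hX'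
    rintro ⟨W', N, x'', -, -, hsuff', hnot'⟩
    simp only [merge_empty] at hsuff' hnot'
    exact hnot' N subset_rfl hsuff'

/-- Def 3 implies Def 2 (for singleton causes, which Def 3 causes
always are): contrastive necessity with actual direct sufficiency implies
contrastive necessity with actual strong sufficiency. -/
theorem def3_implies_def2 {U V α : Type} (M : CausalModel U V α) (u : U)
    (X0 : V) (x0 : α) (Y0 : V) (y : α) (hne : X0 ≠ Y0)
    (h : CauseDef3 M u {X0} (fun _ => x0) Y0 y) :
    CauseDef2 M u {X0} (fun _ => x0) Y0 y :=
  def3_implies_def2_general M u X0 x0 Y0 y h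

end CausalModel
end

section
/- If X=x causes Y=y in (M,u⃗) according to Def 10 (contrastive minimal necessity with non-actual weak sufficiency), then X=x causes Y=y according to Def 4 (contrastive necessity with non-actual weak sufficiency); concretely, if (X=x, W⃗=w⃗*) is weakly sufficient for Y=y while W⃗=w⃗* is not, then there exists a value x' of X such that (X=x', W⃗=w⃗*) is not weakly sufficient for Y=y. -/
open Classical

namespace CausalModel

/-- Def 10 implies Def 4 (with non-actual weak sufficiency):
if `(X=x, W⃗=w⃗*)` is weakly sufficient for `Y=y` while `W⃗=w⃗*` alone is not,
then there is a (in-range) contrast value `x'` such that `(X=x', W⃗=w⃗*)` is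
not weakly sufficient for `Y=y`. -/
theorem def10_implies_def4 {U V α : Type} (M : CausalModel U V α) (u : U)
    (X0 Y0 : V) (x0 y : α) (W : Set V)
    (hd : Disjoint W ({X0} ∪ {Y0} : Set V)) (hXY : X0 ≠ Y0)
    (h1 : M.weaklySuff ({X0} ∪ W) (merge {X0} (fun _ => x0) (M.actual u)) {Y0} (fun _ => y))
    (h2 : ¬ M.weaklySuff W (M.actual u) {Y0} (fun _ => y)) :
    ∃ x' : α, x' ∈ M.rng X0 ∧
      ¬ M.weaklySuff ({X0} ∪ W) (merge {X0} (fun _ => x') (M.actual u)) {Y0} (fun _ => y) := by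
  simp only [weaklySuff, not_forall] at h2
  obtain ⟨u', Y, hY, hne⟩ := h2
  rw [Set.mem_singleton_iff] at hY; subst hY
  have hX0W : X0 ∉ W := fun h => hd.ne_of_mem h (Set.mem_union_left _ rfl) rfl
  set s := M.solve W (M.actual u) u' with hs
  set x' := s X0 with hx'
  refine ⟨x', ?_, ?_⟩
  · rw [hx', hs, M.solve_not_mem W (M.actual u) u' X0 hX0W]
    exact M.F_rng _ _ _
  · intro hws
    have key : s = M.solve ({X0} ∪ W) (merge {X0} (fun _ => x') (M.actual u)) u' := by
      apply M.solve_unique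
      · intro v hv
        rcases hv with hv | hv
        · rw [Set.mem_singleton_iff] at hv; subst hv
          simp [merge]
          exact hx'.symm
        · have hvX : v ≠ X0 := fun h => hX0W (h ▸ hv)
          rw [show merge {X0} (fun _ => x') (M.actual u) v = M.actual u v by
            simp [merge, hvX]]
          exact M.solve_mem W (M.actual u) u' v hv
      · intro v hv
        have hvW : v ∉ W := fun h => hv (Set.mem_union_right _ h)
        exact M.solve_not_mem W (M.actual u) u' v hvW
    apply hne
    have := hws u' Y rfl
    rw [← key] at this
    exact this

end CausalModel
end
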